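/- arXiv:2211.02990 — 5 statements merged into one kernel-verified Lean document; each statement's English description precedes it below -/
import Mathlib

section
/- Let X be a compact metric space and μ_n, μ Borel probability measures on X with μ_n → μ weakly. Then the functionals J(C; μ_n) = E_{μ_n}[d(x,C)²] converge to J(C; μ) uniformly over all nonempty closed subsets C of X. -/
/-!
Nonempty closed subsets of `X` are compact, and with the Hausdorff metric they form a compact
space. Since `|d(x,C)² - d(x,C')²| ≤ 2 diam X · d_H(C, C')`, the maps `C ↦ J(C; μₙ)` are
uniformly Lipschitz, and an equicontinuous sequence converging pointwise on a compact space
converges uniformly.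
-/

open Metric Filter MeasureTheory TopologicalSpace

theorem Equicontinuous.tendstoUniformly_of_tendsto {ι α β : Type*} [TopologicalSpace α]
    [CompactSpace α] [UniformSpace β] {F : ι → α → β} {f : α → β} {l : Filter ι}
    (hF : Equicontinuous F) (h : ∀ a, Tendsto (F · a) l (nhds (f a))) :
    TendstoUniformly F f l :=
  UniformFun.tendsto_iff_tendstoUniformly.1 <|
    (hF.tendsto_uniformFun_iff_pi l f).2 (tendsto_pi_nhds.2 h)

theorem lipschitzWith_integral_of_forall {Y Ω : Type*} [PseudoMetricSpace Y]
    [MeasurableSpace Ω] {μ : Measure Ω} [IsProbabilityMeasure μ] {f : Y → Ω → ℝ} {K : NNReal}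
    (hint : ∀ y, Integrable (f y) μ) (hf : ∀ ω, LipschitzWith K (f · ω)) :
    LipschitzWith K fun y => ∫ ω, f y ω ∂μ := by
  refine LipschitzWith.of_dist_le_mul fun y z => ?_
  calc dist (∫ ω, f y ω ∂μ) (∫ ω, f z ω ∂μ) = ‖∫ ω, (f y ω - f z ω) ∂μ‖ := by
        rw [dist_eq_norm, integral_sub (hint y) (hint z)]
    _ ≤ K * dist y z * μ.real Set.univ := norm_integral_le_of_norm_le_const <|
        Eventually.of_forall fun ω => by rw [← dist_eq_norm]; exact (hf ω).dist_le_mul y z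
    _ = K * dist y z := by simp

section

variable {X : Type*} [MetricSpace X] [CompactSpace X]

theorem lipschitzWith_infDist_sq_set (x : X) :
    LipschitzWith (2 * diam (Set.univ : Set X)).toNNReal
      fun K : NonemptyCompacts X => infDist x K ^ 2 := by
  refine LipschitzWith.of_dist_le' fun K L => ?_
  have hbound (K : NonemptyCompacts X) : infDist x K ≤ diam (Set.univ : Set X) :=
    (infDist_le_dist_of_mem K.nonempty.some_mem).trans
      (dist_le_diam_of_mem isBounded_of_compactSpace (Set.mem_univ _) (Set.mem_univ _))
  have hKL : |infDist x K - infDist x L| ≤ dist K L := by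
    simpa [Real.dist_eq] using (lipschitz_infDist_set x).dist_le_mul K L
  rw [Real.dist_eq, show infDist x K ^ 2 - infDist x L ^ 2
    = (infDist x K + infDist x L) * (infDist x K - infDist x L) by ring, abs_mul,
    abs_of_nonneg (add_nonneg infDist_nonneg infDist_nonneg)]
  exact mul_le_mul (by linarith [hbound K, hbound L]) hKL (abs_nonneg _)
    (mul_nonneg zero_le_two diam_nonneg)

theorem tendstoUniformly_integral_infDist_sq [MeasurableSpace X] [BorelSpace X]
    (μ : ℕ → Measure X) (ν : Measure X) [∀ n, IsProbabilityMeasure (μ n)]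
    (hweak : ∀ f : C(X, ℝ), Tendsto (fun n => ∫ x, f x ∂(μ n)) atTop (nhds (∫ x, f x ∂ν))) :
    TendstoUniformly (fun n (K : NonemptyCompacts X) => ∫ x, infDist x K ^ 2 ∂(μ n))
      (fun K => ∫ x, infDist x K ^ 2 ∂ν) atTop := by
  have hcont (K : NonemptyCompacts X) : Continuous fun x : X => infDist x K ^ 2 :=
    (continuous_infDist_pt _).pow 2
  have hlip (n : ℕ) : LipschitzWith (2 * diam (Set.univ : Set X)).toNNReal
      fun K : NonemptyCompacts X => ∫ x, infDist x K ^ 2 ∂(μ n) :=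
    lipschitzWith_integral_of_forall (fun K => (hcont K).integrable_of_hasCompactSupport
      (HasCompactSupport.of_compactSpace _)) lipschitzWith_infDist_sq_set
  exact (LipschitzWith.uniformEquicontinuous _ _ hlip).equicontinuous.tendstoUniformly_of_tendsto
    fun K => hweak ⟨_, hcont K⟩

end

theorem stmt3_general {X : Type*} [MetricSpace X] [CompactSpace X] [MeasurableSpace X] [BorelSpace X]
    (μ : ℕ → Measure X) (ν : Measure X) [∀ n, IsProbabilityMeasure (μ n)]
    (hweak : ∀ f : C(X, ℝ), Tendsto (fun n => ∫ x, f x ∂(μ n)) atTop (nhds (∫ x, f x ∂ν))) :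
    ∀ ε > (0 : ℝ), ∃ N : ℕ, ∀ n ≥ N, ∀ C : Set X, C.Nonempty → IsClosed C →
      |(∫ x, infDist x C ^ 2 ∂(μ n)) - ∫ x, infDist x C ^ 2 ∂ν| ≤ ε := by
  intro ε hε
  obtain ⟨N, hN⟩ := eventually_atTop.1 <|
    Metric.tendstoUniformly_iff.1 (tendstoUniformly_integral_infDist_sq μ ν hweak) ε hε
  refine ⟨N, fun n hn C hne hC => ?_⟩
  have hclose := hN n hn ⟨⟨C, hC.isCompact⟩, hne⟩
  rw [Real.dist_eq, abs_sub_comm] at hclose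
  exact hclose.le

theorem stmt3 {X : Type*} [MetricSpace X] [CompactSpace X] [MeasurableSpace X] [BorelSpace X]
    (μ : ℕ → Measure X) (ν : Measure X) [∀ n, IsProbabilityMeasure (μ n)]
    [IsProbabilityMeasure ν]
    (hweak : ∀ f : C(X, ℝ), Tendsto (fun n => ∫ x, f x ∂(μ n)) atTop (nhds (∫ x, f x ∂ν))) :
    ∀ ε > (0 : ℝ), ∃ N : ℕ, ∀ n ≥ N, ∀ C : Set X, C.Nonempty → IsClosed C →
      |(∫ x, infDist x C ^ 2 ∂(μ n)) - ∫ x, infDist x C ^ 2 ∂ν| ≤ ε :=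
  stmt3_general μ ν hweak
end

section
/- Flashlight lemma: Let X be a compact convex subset of a Hilbert space H with dim H ≥ 2, having nonempty interior containing the origin. Let x_0 ∈ ∂X and let B_δ(x_0) be an open ball not containing 0. Then there exists a convex cone K of rays from the origin with nonempty interior containing x_0 such that ∂X ∩ K ⊆ ∂X ∩ B_δ(x_0). -/
/-!
The cone is spanned by a small ball around `x0`. Rays from the origin meet the boundary of `X`
exactly once, at the radial projection `c ↦ (gauge X c)⁻¹ • c`, which is continuous at `x0`
(where the gauge is `1`) and fixes `x0`; so for a small enough ball every boundary point of the
cone lies in `B_δ(x0)`.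
-/

open Filter Topology Pointwise

namespace PointedCone

variable {𝕜 E : Type*} [Field 𝕜] [LinearOrder 𝕜] [IsStrictOrderedRing 𝕜] [AddCommGroup E]
  [Module 𝕜 E] {s : Set E} {x : E}

lemma mem_hull_of_convex (hs : Convex 𝕜 s) (hne : s.Nonempty) :
    x ∈ hull 𝕜 s ↔ ∃ r : 𝕜, 0 ≤ r ∧ x ∈ r • s where
  mp hx := by
    let C : PointedCone 𝕜 E := ofConeComb {y | ∃ r : 𝕜, 0 ≤ r ∧ y ∈ r • s}
      (let ⟨c, hc⟩ := hne; ⟨c, 1, zero_le_one, by simpa using hc⟩)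
      (by
        rintro y₁ ⟨r₁, hr₁, hy₁⟩ y₂ ⟨r₂, hr₂, hy₂⟩ a ha b hb
        refine ⟨a * r₁ + b * r₂, by positivity, ?_⟩
        rw [hs.add_smul (mul_nonneg ha hr₁) (mul_nonneg hb hr₂), mul_smul, mul_smul]
        exact Set.add_mem_add (Set.smul_mem_smul_set hy₁) (Set.smul_mem_smul_set hy₂))
    have hC : hull 𝕜 s ≤ C :=
      Submodule.span_le.mpr fun y hy ↦ ⟨1, zero_le_one, by simpa using hy⟩
    exact hC hx
  mpr := by
    rintro ⟨r, hr, y, hy, rfl⟩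
    exact (hull 𝕜 s).smul_mem hr (subset_hull hy)

end PointedCone

section Gauge

variable {E : Type*} [AddCommGroup E] [Module ℝ E] [TopologicalSpace E] [IsTopologicalAddGroup E]
  [ContinuousSMul ℝ E] {s : Set E} {x : E} {r : ℝ}

lemma inv_gauge_eq_of_smul_mem_frontier (hs : Convex ℝ s) (hs₀ : s ∈ 𝓝 0) (hr : 0 ≤ r)
    (hx : r • x ∈ frontier s) : (gauge s x)⁻¹ = r := by
  have h : r * gauge s x = 1 := by
    rw [← smul_eq_mul, ← gauge_smul_of_nonneg hr, gauge_eq_one_iff_mem_frontier hs hs₀]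
    exact hx
  exact (eq_inv_of_mul_eq_one_left h).symm

lemma continuousAt_inv_gauge_smul (hs : Convex ℝ s) (hs₀ : s ∈ 𝓝 0) (hx : gauge s x ≠ 0) :
    ContinuousAt (fun y ↦ (gauge s y)⁻¹ • y) x :=
  ((continuousAt_gauge hs hs₀).inv₀ hx).smul continuousAt_id

lemma frontier_inter_hull_subset (hs : Convex ℝ s) (hs₀ : s ∈ 𝓝 0) {U V : Set E}
    (hU : Convex ℝ U) (hUne : U.Nonempty) (hUV : ∀ c ∈ U, (gauge s c)⁻¹ • c ∈ V) :
    frontier s ∩ PointedCone.hull ℝ U ⊆ V := by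
  rintro y ⟨hys, hyU⟩
  obtain ⟨r, hr, c, hc, rfl⟩ := (PointedCone.mem_hull_of_convex hU hUne).mp hyU
  rw [← inv_gauge_eq_of_smul_mem_frontier hs hs₀ hr hys]
  exact hUV c hc

end Gauge

theorem stmt7_general {H : Type*} [NormedAddCommGroup H] [InnerProductSpace ℝ H]
    (X : Set H) (hXconv : Convex ℝ X) (h0 : (0 : H) ∈ interior X)
    (x0 : H) (hx0 : x0 ∈ frontier X) (δ : ℝ) (hδ : 0 < δ) :
    ∃ K : Set H, (∀ x ∈ K, ∀ r : ℝ, 0 ≤ r → r • x ∈ K) ∧ Convex ℝ K ∧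
      x0 ∈ interior K ∧ frontier X ∩ K ⊆ frontier X ∩ Metric.ball x0 δ := by
  have hX₀ : X ∈ 𝓝 0 := mem_interior_iff_mem_nhds.mp h0
  have hg : gauge X x0 = 1 := (gauge_eq_one_iff_mem_frontier hXconv hX₀).mpr hx0
  have hproj : ContinuousAt (fun y ↦ (gauge X y)⁻¹ • y) x0 :=
    continuousAt_inv_gauge_smul hXconv hX₀ (by simp [hg])
  have hpreimage : (fun y ↦ (gauge X y)⁻¹ • y) ⁻¹' Metric.ball x0 δ ∈ 𝓝 x0 :=
    hproj.preimage_mem_nhds (by simpa [hg] using Metric.ball_mem_nhds x0 hδ)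
  obtain ⟨ε, hε, hball⟩ := Metric.mem_nhds_iff.mp hpreimage
  refine ⟨PointedCone.hull ℝ (Metric.ball x0 ε), fun x hx r hr ↦ PointedCone.smul_mem _ hr hx,
    PointedCone.convex _, ?_, fun y hy ↦ ⟨hy.1, ?_⟩⟩
  · exact interior_maximal PointedCone.subset_hull Metric.isOpen_ball (Metric.mem_ball_self hε)
  · exact frontier_inter_hull_subset hXconv hX₀ (convex_ball x0 ε) ⟨x0, Metric.mem_ball_self hε⟩
      hball hy

theorem stmt7 {H : Type*} [NormedAddCommGroup H] [InnerProductSpace ℝ H]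
    [FiniteDimensional ℝ H] (hdim : 2 ≤ Module.finrank ℝ H)
    (X : Set H) (hXcpt : IsCompact X) (hXconv : Convex ℝ X) (h0 : (0 : H) ∈ interior X)
    (x0 : H) (hx0 : x0 ∈ frontier X) (δ : ℝ) (hδ : 0 < δ) (h0nb : (0 : H) ∉ Metric.ball x0 δ) :
    ∃ K : Set H, (∀ x ∈ K, ∀ r : ℝ, 0 ≤ r → r • x ∈ K) ∧ Convex ℝ K ∧
      x0 ∈ interior K ∧ frontier X ∩ K ⊆ frontier X ∩ Metric.ball x0 δ :=
  stmt7_general X hXconv h0 x0 hx0 δ hδ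
end

section
/- Under the Aitchison geometry, the ordered simplex Δ_{n,≥} = {p ∈ Δ_n : p₁ ≥ ⋯ ≥ p_n} is a polyhedral convex cone: its image under the isometric log-ratio transform equals {x ∈ ℝ^{n−1} : Ax ≥ 0}, where A is the bidiagonal matrix with entries a_{ij} = √((j+1)/j)·δ_{i,j} − √(j/(j+1))·δ_{i,j+1}. -/
/-
Applied to `ilr p`, the bidiagonal matrix `A` returns the consecutive log-ratios
`log p_i - log p_{i+1}`, so `A (ilr p) ≥ 0` says exactly that `p` is decreasing. Conversely, `A` is
lower triangular with positive diagonal, hence injective, and any nonnegative vector `d` is the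
vector of consecutive log-ratios of the normalised exponential of the partial sums `-∑_{t<k} d_t`.
-/

/-- The isometric log-ratio transform on the open unit simplex in `ℝ^(m+1)`. -/
noncomputable def ilr {m : ℕ} (p : Fin (m + 1) → ℝ) : Fin m → ℝ := fun i =>
  Real.sqrt (((i : ℕ) + 1 : ℝ) / ((i : ℕ) + 2)) *
    Real.log ((∏ j ∈ Finset.Iic (Fin.castSucc i), p j) ^ ((1 : ℝ) / ((i : ℕ) + 1)) / p i.succ)

/-- The ordered open unit simplex: positive entries summing to one, arranged decreasingly. -/
def orderedSimplex (m : ℕ) : Set (Fin (m + 1) → ℝ) :=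
  {p | (∀ i, 0 < p i) ∧ (∑ i, p i) = 1 ∧ ∀ i j : Fin (m + 1), i ≤ j → p j ≤ p i}

/-- The bidiagonal matrix `A` with `a_{ij} = √((j+1)/j) δ_{ij} − √(j/(j+1)) δ_{i,j+1}`
(1-based indices), written here with 0-based indices. -/
noncomputable def Amat (m : ℕ) : Fin m → Fin m → ℝ := fun i j =>
  Real.sqrt (((j : ℕ) + 2 : ℝ) / ((j : ℕ) + 1)) * (if i = j then 1 else 0) -
    Real.sqrt (((j : ℕ) + 1 : ℝ) / ((j : ℕ) + 2)) * (if (i : ℕ) = (j : ℕ) + 1 then 1 else 0)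

open Finset Real

noncomputable def ilrSeq (ℓ : ℕ → ℝ) (k : ℕ) : ℝ :=
  √((k + 1) / (k + 2)) * ((∑ j ∈ range (k + 1), ℓ j) / (k + 1) - ℓ (k + 1))

-- At `k = 0` the coefficient `√(0 / 1)` vanishes, so the truncated `k - 1` is harmless.
noncomputable def bidiagSeq (y : ℕ → ℝ) (k : ℕ) : ℝ :=
  √((k + 2) / (k + 1)) * y k - √(k / (k + 1)) * y (k - 1)

theorem bidiagSeq_ilrSeq (ℓ : ℕ → ℝ) (k : ℕ) : bidiagSeq (ilrSeq ℓ) k = ℓ k - ℓ (k + 1) := by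
  have hdiag (a b : ℝ) (ha : 0 < a) (hb : 0 < b) : √(a / b) * √(b / a) = 1 := by
    rw [← sqrt_mul (by positivity), div_mul_div_comm, mul_comm a, div_self (by positivity),
      sqrt_one]
  rcases k with _ | k
  · simp [bidiagSeq, ilrSeq, ← mul_assoc]
  · have hsq : √((k + 1 : ℝ) / (k + 1 + 1)) * √((k + 1) / (k + 2)) = (k + 1) / (k + 2) := by
      rw [show (k + 1 + 1 : ℝ) = k + 2 by ring]; exact mul_self_sqrt (by positivity)
    simp only [bidiagSeq, ilrSeq, Nat.add_sub_cancel, sum_range_succ _ (k + 1)]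
    push_cast
    rw [← mul_assoc, ← mul_assoc, hdiag _ _ (by positivity) (by positivity), hsq]
    field_simp
    ring

theorem sum_Iic_fin_eq_sum_range {M : Type*} [AddCommMonoid M] {n : ℕ} (f : ℕ → M) (c : Fin n) :
    ∑ j ∈ Iic c, f j = ∑ k ∈ range (c + 1), f k := by
  rw [Nat.range_succ_eq_Iic, ← Fin.map_valEmbedding_Iic, sum_map]
  rfl

theorem ilr_apply_eq_ilrSeq {m : ℕ} {p : Fin (m + 1) → ℝ} (hp : ∀ i, 0 < p i) {ℓ : ℕ → ℝ}
    (hℓ : ∀ j : Fin (m + 1), ℓ j = log (p j)) (i : Fin m) : ilr p i = ilrSeq ℓ i := by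
  have hprod : 0 < ∏ j ∈ Iic i.castSucc, p j := prod_pos fun j _ => hp j
  rw [ilr, ilrSeq, log_div (by positivity) (hp _).ne', log_rpow hprod,
    log_prod fun j _ => (hp j).ne']
  simp only [← hℓ, sum_Iic_fin_eq_sum_range, Fin.val_succ, Fin.val_castSucc]
  ring

theorem sum_Amat_mul {m : ℕ} (x : Fin m → ℝ) {y : ℕ → ℝ} (hy : ∀ j : Fin m, y j = x j)
    (i : Fin m) : ∑ j, Amat m i j * x j = bidiagSeq y i := by
  simp_rw [← hy, Amat, Fin.ext_iff]
  rw [Fin.sum_univ_eq_sum_range (fun k => (√((k + 2) / (k + 1)) * (if (i : ℕ) = k then 1 else 0) -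
    √((k + 1) / (k + 2)) * (if (i : ℕ) = k + 1 then 1 else 0)) * y k)]
  simp only [sub_mul, sum_sub_distrib, mul_assoc, ite_mul, one_mul, zero_mul, mul_ite, mul_zero,
    sum_ite_eq, mem_range, i.isLt]
  rcases i with ⟨_ | k, hk⟩
  · simp [bidiagSeq]
  · simp only [bidiagSeq, Nat.add_right_cancel_iff, sum_ite_eq, mem_range, show k < m by omega,
      if_true, Nat.add_sub_cancel]
    push_cast
    ring_nf

theorem sum_Amat_mul_ilr {m : ℕ} {p : Fin (m + 1) → ℝ} (hp : ∀ i, 0 < p i) (i : Fin m) :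
    ∑ j, Amat m i j * ilr p j = log (p i.castSucc) - log (p i.succ) := by
  set ℓ : ℕ → ℝ := Function.extend Fin.val (fun j => log (p j)) 0
  have hℓ (j : Fin (m + 1)) : ℓ j = log (p j) := Fin.val_injective.extend_apply _ _ j
  rw [sum_Amat_mul _ fun j => (ilr_apply_eq_ilrSeq hp hℓ j).symm, bidiagSeq_ilrSeq,
    ← hℓ, ← hℓ, Fin.val_castSucc, Fin.val_succ]

theorem Amat_isLowerTriangular (m : ℕ) : (Matrix.of (Amat m)).IsLowerTriangular := by
  intro i j (hij : i < j)
  have : (i : ℕ) ≠ j + 1 := by omega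
  simp [Amat, hij.ne, this]

theorem mulVec_Amat_injective (m : ℕ) : Function.Injective (Matrix.of (Amat m)).mulVec := by
  rw [Matrix.mulVec_injective_iff_isUnit, Matrix.isUnit_iff_isUnit_det, isUnit_iff_ne_zero,
    Matrix.det_of_isLowerTriangular _ (Amat_isLowerTriangular m)]
  refine prod_ne_zero_iff.2 fun i _ => ?_
  simp [Amat]
  positivity

theorem exists_mem_orderedSimplex_log_eq_sub {m : ℕ} {ℓ : Fin (m + 1) → ℝ} (hℓ : Antitone ℓ) :
    ∃ p ∈ orderedSimplex m, ∃ c, ∀ i, log (p i) = ℓ i - c := by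
  set Z := ∑ i, exp (ℓ i)
  have hZ : 0 < Z := sum_pos (fun i _ => exp_pos _) univ_nonempty
  refine ⟨fun i => exp (ℓ i) / Z, ⟨fun i => by positivity, ?_, fun i j hij => ?_⟩, log Z,
    fun i => by rw [log_div (exp_pos _).ne' hZ.ne', log_exp]⟩
  · rw [← sum_div, div_self hZ.ne']
  · exact div_le_div_of_nonneg_right (exp_le_exp.2 (hℓ hij)) hZ.le

theorem exists_mem_orderedSimplex_log_sub_log {m : ℕ} {d : Fin m → ℝ} (hd : ∀ i, 0 ≤ d i) :
    ∃ p ∈ orderedSimplex m, ∀ i : Fin m, log (p i.castSucc) - log (p i.succ) = d i := by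
  set D : ℕ → ℝ := Function.extend Fin.val d 0
  have hD (i : Fin m) : D i = d i := Fin.val_injective.extend_apply _ _ i
  have hD_nonneg (t : ℕ) : 0 ≤ D t := by
    by_cases ht : ∃ i : Fin m, ↑i = t
    · obtain ⟨i, rfl⟩ := ht
      rw [hD]
      exact hd i
    · simp only [D, Function.extend_apply' _ _ _ ht, Pi.zero_apply, le_refl]
  have hanti : Antitone fun k : Fin (m + 1) => -∑ t ∈ range k, D t := fun i j hij =>
    neg_le_neg (sum_le_sum_of_subset_of_nonneg (range_subset_range.2 hij) fun t _ _ => hD_nonneg t)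
  obtain ⟨p, hp, c, hpℓ⟩ := exists_mem_orderedSimplex_log_eq_sub hanti
  refine ⟨p, hp, fun i => ?_⟩
  rw [hpℓ, hpℓ, Fin.val_castSucc, Fin.val_succ, sum_range_succ, hD]
  ring

theorem stmt13 (m : ℕ) :
    ilr '' orderedSimplex m = {x : Fin m → ℝ | ∀ i, 0 ≤ ∑ j, Amat m i j * x j} := by
  ext x
  constructor
  · rintro ⟨p, ⟨hp, -, hanti⟩, rfl⟩ i
    rw [sum_Amat_mul_ilr hp, sub_nonneg]
    exact log_le_log (hp _) (hanti _ _ Fin.castSucc_lt_succ.le)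
  · intro hx
    obtain ⟨p, hp, hlog⟩ := exists_mem_orderedSimplex_log_sub_log hx
    refine ⟨p, hp, mulVec_Amat_injective m (funext fun i => ?_)⟩
    exact (sum_Amat_mul_ilr hp.1 i).trans (hlog i)
end

section
/- Dropping the orthogonality constraint in Euclidean PCA of projected data: Let H be a finite-dimensional real Hilbert space, P a subspace, and x₁,…,x_N, x̄ ∈ H. Then inf over unit vectors p ∈ P^⊥ of (1/N)Σᵢ inf_{z ∈ span{p}} ||Π_{P^⊥}(xᵢ − x̄) − z||² equals the inf over all unit vectors p ∈ H of the same quantity; moreover if some xᵢ − x̄ ∉ P then every minimizer over all unit vectors lies in P^⊥. -/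
/-!
For a unit vector `p` the inner infimum equals `‖yᵢ‖² - ⟪yᵢ, p⟫²`, where
`yᵢ = Π_{Pᗮ}(xᵢ - x̄) ∈ Pᗮ`, so minimising the objective means maximising `S(p) = ∑ ⟪yᵢ, p⟫²`. Since every `yᵢ` lies in `Pᗮ`,
`S` only sees the projection `v` of `p` onto `Pᗮ`, and being quadratic it satisfies
`S(p) = ‖v‖² S(v / ‖v‖)`. As `‖v‖ ≤ 1`, with equality exactly when `p ∈ Pᗮ`, replacing `p` by the
unit vector `v / ‖v‖ ∈ Pᗮ` never decreases `S`, and strictly increases it at a maximiser outside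
`Pᗮ` as soon as the maximum is positive, i.e. as soon as some `yᵢ ≠ 0`.
-/

open RealInnerProductSpace

theorem norm_sub_smul_sq_of_norm_eq_one {H : Type*} [NormedAddCommGroup H] [InnerProductSpace ℝ H]
    (y : H) {p : H} (hp : ‖p‖ = 1) (c : ℝ) :
    ‖y - c • p‖ ^ 2 = ‖y‖ ^ 2 - ⟪y, p⟫ ^ 2 + (c - ⟪y, p⟫) ^ 2 := by
  rw [norm_sub_sq_real, real_inner_smul_right, norm_smul, Real.norm_eq_abs, hp, mul_one, sq_abs]
  ring

theorem iInf_span_singleton_norm_sub_sq {H : Type*} [NormedAddCommGroup H]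
    [InnerProductSpace ℝ H] (y : H) {p : H} (hp : ‖p‖ = 1) :
    ⨅ z : Submodule.span ℝ {p}, ‖y - (z : H)‖ ^ 2 = ‖y‖ ^ 2 - ⟪y, p⟫ ^ 2 := by
  refine le_antisymm ?_ (le_ciInf ?_)
  · have hbdd : BddBelow (Set.range fun z : Submodule.span ℝ {p} => ‖y - (z : H)‖ ^ 2) :=
      ⟨0, by rintro r ⟨z, rfl⟩; positivity⟩
    have hmem : ⟪y, p⟫ • p ∈ Submodule.span ℝ {p} :=
      Submodule.smul_mem _ _ (Submodule.mem_span_singleton_self p)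
    refine (ciInf_le hbdd ⟨_, hmem⟩).trans ?_
    rw [norm_sub_smul_sq_of_norm_eq_one y hp, sub_self]
    simp
  · rintro ⟨z, hz⟩
    obtain ⟨c, rfl⟩ := Submodule.mem_span_singleton.mp hz
    rw [norm_sub_smul_sq_of_norm_eq_one y hp]
    exact le_add_of_nonneg_right (sq_nonneg _)

theorem csInf_image_eq_of_forall_exists_le {α β : Type*} [ConditionallyCompleteLinearOrder β]
    {f : α → β} {s t : Set α} (hst : s ⊆ t) (hf : BddBelow (f '' t))
    (h : ∀ p ∈ t, ∃ q ∈ s, f q ≤ f p) : sInf (f '' s) = sInf (f '' t) := by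
  rcases t.eq_empty_or_nonempty with rfl | ⟨p, hp⟩
  · rw [Set.subset_empty_iff.mp hst]
  obtain ⟨q, hq, -⟩ := h p hp
  refine le_antisymm ?_ (csInf_le_csInf hf ⟨f q, q, hq, rfl⟩ (Set.image_mono hst))
  refine le_csInf ⟨f p, p, hp, rfl⟩ ?_
  rintro _ ⟨p', hp', rfl⟩
  obtain ⟨q', hq', hle⟩ := h p' hp'
  exact (csInf_le (hf.mono (Set.image_mono hst)) ⟨q', hq', rfl⟩).trans hle

theorem Real.sInf_image_eq_zero_of_eqOn_zero {α : Type*} {f : α → ℝ} {s : Set α}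
    (h : Set.EqOn f 0 s) : sInf (f '' s) = 0 := by
  refine le_antisymm (Real.sInf_nonpos ?_) (Real.sInf_nonneg ?_) <;>
    rintro _ ⟨p, hp, rfl⟩ <;> rw [h hp, Pi.zero_apply]

theorem Submodule.starProjection_orthogonal_eq_zero_iff {E : Type*} [NormedAddCommGroup E]
    [InnerProductSpace ℝ E] {K : Submodule ℝ E} [K.HasOrthogonalProjection] {v : E} :
    Kᗮ.starProjection v = 0 ↔ v ∈ K := by
  rw [starProjection_apply, coe_eq_zero, orthogonalProjectionOnto_eq_zero_iff,
    orthogonal_orthogonal]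

theorem smul_norm_inv_smul {E : Type*} [NormedAddCommGroup E] [NormedSpace ℝ E] (v : E) :
    ‖v‖ • ‖v‖⁻¹ • v = v := by
  rcases eq_or_ne v 0 with rfl | hv
  · simp
  · exact smul_inv_smul₀ (norm_ne_zero_iff.mpr hv) v

theorem norm_inv_norm_smul_self {E : Type*} [NormedAddCommGroup E] [NormedSpace ℝ E] {v : E}
    (hv : v ≠ 0) : ‖‖v‖⁻¹ • v‖ = 1 := by
  rw [norm_smul, norm_inv, norm_norm, inv_mul_cancel₀ (norm_ne_zero_iff.mpr hv)]

section SumSqInner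

variable {H ι : Type*} [NormedAddCommGroup H] [InnerProductSpace ℝ H] [Fintype ι]

def sumSqInner (y : ι → H) (p : H) : ℝ := ∑ i, ⟪y i, p⟫ ^ 2

variable {y : ι → H}

theorem sumSqInner_nonneg (p : H) : 0 ≤ sumSqInner y p :=
  Finset.sum_nonneg fun _ _ => sq_nonneg _

theorem sumSqInner_smul (c : ℝ) (p : H) : sumSqInner y (c • p) = c ^ 2 * sumSqInner y p := by
  simp only [sumSqInner, real_inner_smul_right, mul_pow, Finset.mul_sum]

@[simp]
theorem sumSqInner_zero : sumSqInner y 0 = 0 := by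
  simp [sumSqInner]

theorem sq_inner_le_sumSqInner (i : ι) (p : H) : ⟪y i, p⟫ ^ 2 ≤ sumSqInner y p :=
  Finset.single_le_sum (f := fun i => ⟪y i, p⟫ ^ 2) (fun _ _ => sq_nonneg _) (Finset.mem_univ i)

theorem sum_iInf_span_singleton_norm_sub_sq {p : H} (hp : ‖p‖ = 1) :
    ∑ i, ⨅ z : Submodule.span ℝ {p}, ‖y i - (z : H)‖ ^ 2 = ∑ i, ‖y i‖ ^ 2 - sumSqInner y p := by
  simp only [iInf_span_singleton_norm_sub_sq _ hp, Finset.sum_sub_distrib, sumSqInner]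

variable {K : Submodule ℝ H} [K.HasOrthogonalProjection]

theorem sumSqInner_starProjection (hy : ∀ i, y i ∈ K) (p : H) :
    sumSqInner y (K.starProjection p) = sumSqInner y p := by
  simp only [sumSqInner, ← K.inner_starProjection_left_eq_right,
    K.starProjection_eq_self_iff.mpr (hy _)]

theorem sumSqInner_eq_norm_sq_mul (hy : ∀ i, y i ∈ K) (p : H) :
    sumSqInner y p = ‖K.starProjection p‖ ^ 2 *
      sumSqInner y (‖K.starProjection p‖⁻¹ • K.starProjection p) := by
  rw [← sumSqInner_smul, smul_norm_inv_smul, sumSqInner_starProjection hy]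

theorem exists_mem_norm_eq_one_sumSqInner_le (hK : K ≠ ⊥) (hy : ∀ i, y i ∈ K) {p : H}
    (hp : ‖p‖ = 1) : ∃ q ∈ K, ‖q‖ = 1 ∧ sumSqInner y p ≤ sumSqInner y q := by
  rcases eq_or_ne (K.starProjection p) 0 with hv | hv
  · obtain ⟨w, hwK, hw⟩ := K.ne_bot_iff.mp hK
    refine ⟨‖w‖⁻¹ • w, K.smul_mem _ hwK, norm_inv_norm_smul_self hw, ?_⟩
    rw [← sumSqInner_starProjection hy p, hv, sumSqInner_zero]
    exact sumSqInner_nonneg _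
  · refine ⟨_, K.smul_mem _ (K.starProjection_apply_mem p), norm_inv_norm_smul_self hv, ?_⟩
    have hle : ‖K.starProjection p‖ ≤ 1 := hp ▸ K.norm_starProjection_apply_le p
    rw [sumSqInner_eq_norm_sq_mul hy p]
    exact mul_le_of_le_one_left (sumSqInner_nonneg _) (pow_le_one₀ (norm_nonneg _) hle)

theorem mem_of_forall_sumSqInner_le (hy : ∀ i, y i ∈ K) (hy0 : ∃ i, y i ≠ 0) {p : H}
    (hp : ‖p‖ = 1) (hmax : ∀ q : H, ‖q‖ = 1 → sumSqInner y q ≤ sumSqInner y p) : p ∈ K := by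
  obtain ⟨i, hi⟩ := hy0
  have hpos : 0 < sumSqInner y p := by
    refine lt_of_lt_of_le ?_ (hmax _ (norm_inv_norm_smul_self hi))
    refine lt_of_lt_of_le ?_ (sq_inner_le_sumSqInner i _)
    rw [real_inner_smul_right, real_inner_self_eq_norm_sq]
    have := norm_pos_iff.mpr hi
    positivity
  have hv : K.starProjection p ≠ 0 := by
    intro hv
    rw [← sumSqInner_starProjection hy p, hv, sumSqInner_zero] at hpos
    exact hpos.false
  have hge : 1 ≤ ‖K.starProjection p‖ ^ 2 := by
    have := hmax _ (norm_inv_norm_smul_self hv)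
    rw [sumSqInner_eq_norm_sq_mul hy p] at hpos this
    nlinarith
  have hle : ‖K.starProjection p‖ ≤ 1 := hp ▸ K.norm_starProjection_apply_le p
  rw [K.mem_iff_norm_starProjection, hp]
  nlinarith [norm_nonneg (K.starProjection p)]

end SumSqInner

theorem stmt16 {H : Type*} [NormedAddCommGroup H] [InnerProductSpace ℝ H]
    [FiniteDimensional ℝ H]
    (P : Submodule ℝ H) (N : ℕ) (x : Fin N → H) (xbar : H)
    (f : H → ℝ)
    (hf : f = fun p => (1 / (N : ℝ)) * ∑ i, ⨅ z : Submodule.span ℝ {p},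
      ‖(Submodule.orthogonalProjectionOnto Pᗮ (x i - xbar) : H) - (z : H)‖ ^ 2) :
    sInf (f '' {p | p ∈ Pᗮ ∧ ‖p‖ = 1}) = sInf (f '' {p | ‖p‖ = 1}) ∧
    ((∃ i, x i - xbar ∉ P) →
      ∀ p : H, ‖p‖ = 1 → (∀ q : H, ‖q‖ = 1 → f p ≤ f q) → p ∈ Pᗮ) := by
  set y : Fin N → H := fun i => Pᗮ.starProjection (x i - xbar)
  have hy : ∀ i, y i ∈ Pᗮ := fun i => Pᗮ.starProjection_apply_mem _
  have hf_unit : ∀ p : H, ‖p‖ = 1 →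
      f p = (1 / N : ℝ) * ∑ i, ‖y i‖ ^ 2 - (1 / N : ℝ) * sumSqInner y p := by
    intro p hp
    rw [hf, ← mul_sub, ← sum_iInf_span_singleton_norm_sub_sq hp]
    rfl
  have hf_bdd : BddBelow (f '' {p | ‖p‖ = 1}) := by
    refine ⟨0, ?_⟩
    rintro _ ⟨p, -, rfl⟩
    rw [hf]
    exact mul_nonneg (by positivity)
      (Finset.sum_nonneg fun i _ => Real.iInf_nonneg fun z => by positivity)
  refine ⟨?_, ?_⟩
  · by_cases hP : Pᗮ = ⊥
    · have hf0 : Set.EqOn f 0 {p | ‖p‖ = 1} := fun p hp => by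
        simp [hf_unit p hp, y, hP, sumSqInner]
      rw [Real.sInf_image_eq_zero_of_eqOn_zero (hf0.mono fun p hp => hp.2),
        Real.sInf_image_eq_zero_of_eqOn_zero hf0]
    · refine csInf_image_eq_of_forall_exists_le (fun p hp => hp.2) hf_bdd fun p hp => ?_
      obtain ⟨q, hqP, hq, hle⟩ := exists_mem_norm_eq_one_sumSqInner_le hP hy hp
      refine ⟨q, ⟨hqP, hq⟩, ?_⟩
      rw [hf_unit p hp, hf_unit q hq]
      gcongr
  · rintro ⟨i, hi⟩ p hp hmin
    have hN : (0 : ℝ) < 1 / N := by have := i.pos; positivity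
    refine mem_of_forall_sumSqInner_le hy ⟨i, ?_⟩ hp fun q hq => ?_
    · exact mt Submodule.starProjection_orthogonal_eq_zero_iff.mp hi
    · have := hmin q hq
      rw [hf_unit p hp, hf_unit q hq] at this
      exact le_of_mul_le_mul_left (by linarith) hN
end

section
/- Let X be a compact convex subset of ℝ^d with nonempty interior, x̄ ∈ int(X), and x̄_n → x̄ in X. For fixed k ≥ 1, the families 𝔠_n = CC_{x̄_n,k}(X) converge to 𝔠 = CC_{x̄,k}(X) in the Kuratowski sense with respect to the Hausdorff distance: (i) every C ∈ 𝔠 is a Hausdorff limit of sets C_n ∈ 𝔠_n, and (ii) every Hausdorff accumulation point of a sequence C_n ∈ 𝔠_n belongs to 𝔠. -/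
/-!
(i) A homothety centred at a point `w ∈ X` on the ray from `x̄` through `x̄ₙ` maps `X` into itself
and `x̄` to `x̄ₙ`; since a ball around `x̄` lies in `X`, its ratio is `1 - O(|x̄ₙ - x̄|)`, so it moves
every point of the bounded set `X` by `O(|x̄ₙ - x̄|)`, and the images of `C` converge to `C`.
(ii) Containment in `X`, convexity and `x̄ ∈ C` pass to Hausdorff limits by approximating points of
`C` with points of the `Cₙ`; affine dimension is lower semicontinuous because affine independence
of `k + 2` points is an open condition.
-/

open Metric Filter

/-- The affine dimension of a set: the rank of the direction of its affine span. -/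
noncomputable def adim {H : Type*} [NormedAddCommGroup H] [NormedSpace ℝ H] (s : Set H) : ℕ :=
  Module.finrank ℝ (affineSpan ℝ s).direction

/-- The family `CC_{x̄,k}(X)` of closed convex subsets of `X` containing `x̄` with affine
dimension at most `k`. -/
def CCset {d : ℕ} (X : Set (EuclideanSpace ℝ (Fin d))) (xbar : EuclideanSpace ℝ (Fin d))
    (k : ℕ) : Set (Set (EuclideanSpace ℝ (Fin d))) :=
  {C | C ⊆ X ∧ IsClosed C ∧ Convex ℝ C ∧ xbar ∈ C ∧ adim C ≤ k}

open Set AffineMap Topology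

section HausdorffLimit

variable {α : Type*} [PseudoMetricSpace α] {D : ℕ → Set α} {C : Set α}

theorem exists_tendsto_of_tendsto_hausdorffDist (hfin : ∀ n, hausdorffEDist (D n) C ≠ ⊤)
    (hD : Tendsto (fun n => hausdorffDist (D n) C) atTop (𝓝 0)) {x : α} (hx : x ∈ C) :
    ∃ u : ℕ → α, (∀ n, u n ∈ D n) ∧ Tendsto u atTop (𝓝 x) := by
  have hu : ∀ n : ℕ, ∃ y ∈ D n, dist y x < hausdorffDist (D n) C + 1 / ((n : ℝ) + 1) :=
    fun n => exists_dist_lt_of_hausdorffDist_lt' hx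
      (lt_add_of_pos_right _ Nat.one_div_pos_of_nat) (hfin n)
  choose u huD hux using hu
  refine ⟨u, huD, tendsto_iff_dist_tendsto_zero.2 <|
    squeeze_zero (fun _ => dist_nonneg) (fun n => (hux n).le) ?_⟩
  simpa using hD.add tendsto_one_div_add_atTop_nhds_zero_nat

theorem mem_of_tendsto_hausdorffDist (hC : IsClosed C) (hfin : ∀ n, hausdorffEDist (D n) C ≠ ⊤)
    (hD : Tendsto (fun n => hausdorffDist (D n) C) atTop (𝓝 0)) {u : ℕ → α}
    (huD : ∀ n, u n ∈ D n) {x : α} (hu : Tendsto u atTop (𝓝 x)) : x ∈ C := by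
  have hCne : C.Nonempty := nonempty_of_hausdorffEDist_ne_top ⟨_, huD 0⟩ (hfin 0)
  have hlim : Tendsto (fun n => infDist (u n) C) atTop (𝓝 (infDist x C)) :=
    ((continuous_infDist_pt C).tendsto x).comp hu
  have hle : infDist x C ≤ 0 := le_of_tendsto_of_tendsto' hlim hD
    fun n => infDist_le_hausdorffDist_of_mem (huD n) (hfin n)
  exact (hC.mem_iff_infDist_zero hCne).2 (hle.antisymm infDist_nonneg)

theorem subset_of_tendsto_hausdorffDist {X : Set α} (hX : IsClosed X) (hDX : ∀ n, D n ⊆ X)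
    (hfin : ∀ n, hausdorffEDist (D n) C ≠ ⊤)
    (hD : Tendsto (fun n => hausdorffDist (D n) C) atTop (𝓝 0)) : C ⊆ X := fun _ hx =>
  let ⟨_, huD, hu⟩ := exists_tendsto_of_tendsto_hausdorffDist hfin hD hx
  hX.mem_of_tendsto hu (Eventually.of_forall fun n => hDX n (huD n))

theorem hausdorffDist_image_le {f : α → α} {s : Set α} {δ : ℝ} (hδ : 0 ≤ δ)
    (hf : ∀ x ∈ s, dist (f x) x ≤ δ) : hausdorffDist (f '' s) s ≤ δ :=
  hausdorffDist_le_of_mem_dist hδ (forall_mem_image.2 fun x hx => ⟨x, hx, hf x hx⟩)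
    fun x hx => ⟨f x, mem_image_of_mem f hx, dist_comm x (f x) ▸ hf x hx⟩

end HausdorffLimit

section NormedSpace

variable {E : Type*} [NormedAddCommGroup E] [NormedSpace ℝ E]

theorem convex_of_tendsto_hausdorffDist {D : ℕ → Set E} {C : Set E} (hDconv : ∀ n, Convex ℝ (D n))
    (hC : IsClosed C) (hfin : ∀ n, hausdorffEDist (D n) C ≠ ⊤)
    (hD : Tendsto (fun n => hausdorffDist (D n) C) atTop (𝓝 0)) : Convex ℝ C := by
  intro x hx y hy a b ha hb hab
  obtain ⟨u, huD, hu⟩ := exists_tendsto_of_tendsto_hausdorffDist hfin hD hx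
  obtain ⟨v, hvD, hv⟩ := exists_tendsto_of_tendsto_hausdorffDist hfin hD hy
  exact mem_of_tendsto_hausdorffDist hC hfin hD (fun n => hDconv n (huD n) (hvD n) ha hb hab)
    ((hu.const_smul a).add (hv.const_smul b))

theorem exists_lineMap_eq_of_closedBall_subset {X : Set E} {x y : E} {r : ℝ} (hr : 0 < r)
    (hball : closedBall x r ⊆ X) (hy : y ∈ X) :
    ∃ w ∈ X, ∃ t ∈ Icc (0 : ℝ) 1, t * r ≤ dist y x ∧ lineMap x w t = y := by
  rcases le_or_gt r (dist y x) with hry | hyr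
  · exact ⟨y, hy, 1, right_mem_Icc.2 zero_le_one, by simpa using hry, lineMap_apply_one x y⟩
  -- `y` lies on the segment from `x` to the point of the sphere of radius `r` in its direction
  refine ⟨x + (r / dist y x) • (y - x), hball ?_, dist y x / r,
    ⟨by positivity, (div_le_one hr).2 hyr.le⟩, (div_mul_cancel₀ _ hr.ne').le, ?_⟩
  · rw [mem_closedBall, dist_eq_norm, add_sub_cancel_left, norm_smul, ← dist_eq_norm,
      Real.norm_eq_abs, abs_of_nonneg (by positivity)]
    rcases eq_or_ne (dist y x) 0 with h0 | h0
    · simp [h0, hr.le]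
    · rw [div_mul_cancel₀ _ h0]
  · rcases eq_or_ne y x with rfl | hyx
    · simp
    · have h0 : dist y x ≠ 0 := dist_ne_zero.2 hyx
      have hscale : dist y x / r * (r / dist y x) = 1 := by field_simp
      rw [lineMap_apply_module', add_sub_cancel_left, smul_smul, hscale, one_smul, sub_add_cancel]

theorem exists_affineMap_mapsTo_of_closedBall_subset {X : Set E} (hX : Convex ℝ X) {x y : E}
    {r : ℝ} (hr : 0 < r) (hball : closedBall x r ⊆ X) (hy : y ∈ X) :
    ∃ f : E →ᵃ[ℝ] E, f x = y ∧ MapsTo f X X ∧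
      ∀ c, dist (f c) c ≤ dist y x + dist y x / r * dist c x := by
  obtain ⟨w, hw, t, ht, htr, rfl⟩ := exists_lineMap_eq_of_closedBall_subset hr hball hy
  have ht' : 1 - t ∈ Icc (0 : ℝ) 1 := ⟨by linarith [ht.2], by linarith [ht.1]⟩
  refine ⟨homothety w (1 - t), by rw [homothety_eq_lineMap, lineMap_apply_one_sub],
    fun c hc => homothety_eq_lineMap w (1 - t) c ▸ hX.lineMap_mem hw hc ht', fun c => ?_⟩
  have hdist : dist (lineMap x w t) x = t * dist w x := by
    rw [dist_lineMap_left, Real.norm_eq_abs, abs_of_nonneg ht.1, dist_comm]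
  have hle : t ≤ dist (lineMap x w t) x / r := (le_div_iff₀ hr).2 htr
  calc dist (homothety w (1 - t) c) c = t * dist w c := by
        rw [dist_homothety_self, sub_sub_cancel, Real.norm_eq_abs, abs_of_nonneg ht.1]
    _ ≤ t * dist w x + t * dist c x := by
        rw [← mul_add, dist_comm c x]; exact mul_le_mul_of_nonneg_left (dist_triangle _ _ _) ht.1
    _ = dist (lineMap x w t) x + t * dist c x := by rw [hdist]
    _ ≤ _ := by gcongr

end NormedSpace

section AffineDimension

variable {E : Type*} [NormedAddCommGroup E] [NormedSpace ℝ E] [FiniteDimensional ℝ E]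

theorem adim_image_le {F : Type*} [NormedAddCommGroup F] [NormedSpace ℝ F] (f : E →ᵃ[ℝ] F)
    (s : Set E) : adim (f '' s) ≤ adim s := by
  rw [adim, ← AffineSubspace.map_span, AffineSubspace.map_direction]
  exact Submodule.finrank_map_le _ _

theorem exists_affineIndependent_of_lt_adim {s : Set E} {k : ℕ} (hs : k < adim s) :
    ∃ p : Fin (k + 2) → E, (∀ i, p i ∈ s) ∧ AffineIndependent ℝ p := by
  obtain ⟨t, hts, hspan, hind⟩ := exists_affineIndependent ℝ E s
  have : Fintype t := (finite_set_of_fin_dim_affineIndependent ℝ hind).fintype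
  obtain rfl | ht := t.eq_empty_or_nonempty
  · rw [adim, ← hspan, AffineSubspace.span_empty, AffineSubspace.direction_bot,
      finrank_bot] at hs
    exact absurd hs (Nat.not_lt_zero k)
  have : Nonempty t := ht.to_subtype
  have hcard : adim s + 1 = Fintype.card t := by
    rw [← hind.finrank_vectorSpan_add_one, Subtype.range_coe, adim, ← hspan,
      direction_affineSpan]
  obtain ⟨e⟩ : Nonempty (Fin (k + 2) ↪ t) :=
    Function.Embedding.nonempty_of_card_le (by simp only [Fintype.card_fin]; omega)
  exact ⟨fun i => e i, fun i => hts (e i).2, hind.comp_embedding e⟩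

theorem adim_le_of_tendsto_hausdorffDist {D : ℕ → Set E} {C : Set E} {k : ℕ}
    (hDk : ∀ n, adim (D n) ≤ k) (hfin : ∀ n, hausdorffEDist (D n) C ≠ ⊤)
    (hD : Tendsto (fun n => hausdorffDist (D n) C) atTop (𝓝 0)) : adim C ≤ k := by
  by_contra! hC
  obtain ⟨p, hpC, hp⟩ := exists_affineIndependent_of_lt_adim hC
  choose q hqD hq using fun i => exists_tendsto_of_tendsto_hausdorffDist hfin hD (hpC i)
  -- affine independence is an open condition, so it passes to approximating points in `D n`
  obtain ⟨n, hn⟩ : ∃ n, AffineIndependent ℝ fun i => q i n :=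
    ((tendsto_pi_nhds.2 hq).eventually (isOpen_setOfPred_affineIndependent.mem_nhds hp)).exists
  have hspan : Module.finrank ℝ (vectorSpan ℝ (range fun i => q i n)) ≤ adim (D n) := by
    rw [adim, direction_affineSpan]
    exact Submodule.finrank_mono (vectorSpan_mono ℝ (range_subset_iff.2 fun i => hqD i n))
  have hcard := hn.card_le_finrank_succ
  rw [Fintype.card_fin] at hcard
  linarith [hDk n]

end AffineDimension

section ClosedConvexFamily

variable {d k : ℕ} {X : Set (EuclideanSpace ℝ (Fin d))}

theorem image_mem_CCset (hX : IsCompact X) {x y : EuclideanSpace ℝ (Fin d)}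
    {C : Set (EuclideanSpace ℝ (Fin d))} (hC : C ∈ CCset X x k)
    {f : EuclideanSpace ℝ (Fin d) →ᵃ[ℝ] EuclideanSpace ℝ (Fin d)} (hfx : f x = y)
    (hfX : MapsTo f X X) : f '' C ∈ CCset X y k := by
  obtain ⟨hCX, hCcl, hCconv, hxC, hCk⟩ := hC
  exact ⟨(hfX.mono_left hCX).image_subset,
    ((hX.of_isClosed_subset hCcl hCX).image f.continuous_of_finiteDimensional).isClosed,
    hCconv.affine_image f, hfx ▸ mem_image_of_mem f hxC, (adim_image_le f C).trans hCk⟩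

theorem exists_tendsto_hausdorffDist_of_mem_CCset (hX : IsCompact X) (hXconv : Convex ℝ X)
    {xbar : EuclideanSpace ℝ (Fin d)} (hxbar : xbar ∈ interior X)
    {xb : ℕ → EuclideanSpace ℝ (Fin d)} (hxb : ∀ n, xb n ∈ X) (hconv : Tendsto xb atTop (𝓝 xbar))
    {C : Set (EuclideanSpace ℝ (Fin d))} (hC : C ∈ CCset X xbar k) :
    ∃ Cn : ℕ → Set (EuclideanSpace ℝ (Fin d)), (∀ n, Cn n ∈ CCset X (xb n) k) ∧
      Tendsto (fun n => hausdorffDist (Cn n) C) atTop (𝓝 0) := by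
  obtain ⟨r, hr, hball⟩ := nhds_basis_closedBall.mem_iff.1 (mem_interior_iff_mem_nhds.1 hxbar)
  obtain ⟨M, hM⟩ := hX.isBounded.subset_closedBall xbar
  have hM0 : 0 ≤ M := by simpa using hM (interior_subset hxbar)
  choose f hfx hfX hfdist using fun n =>
    exists_affineMap_mapsTo_of_closedBall_subset hXconv hr hball (hxb n)
  refine ⟨fun n => f n '' C, fun n => image_mem_CCset hX hC (hfx n) (hfX n), ?_⟩
  have hbound (n : ℕ) : hausdorffDist (f n '' C) C ≤ dist (xb n) xbar * (1 + M / r) := by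
    refine hausdorffDist_image_le (by positivity) fun c hc => (hfdist n c).trans ?_
    calc dist (xb n) xbar + dist (xb n) xbar / r * dist c xbar
        ≤ dist (xb n) xbar + dist (xb n) xbar / r * M := by gcongr; exact hM (hC.1 hc)
      _ = dist (xb n) xbar * (1 + M / r) := by ring
  have hlim : Tendsto (fun n => dist (xb n) xbar * (1 + M / r)) atTop (𝓝 0) := by
    simpa using (tendsto_iff_dist_tendsto_zero.1 hconv).mul_const (1 + M / r)
  exact squeeze_zero (fun _ => hausdorffDist_nonneg) hbound hlim

theorem mem_CCset_of_tendsto_hausdorffDist (hX : IsCompact X) {xbar : EuclideanSpace ℝ (Fin d)}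
    {y : ℕ → EuclideanSpace ℝ (Fin d)} (hy : Tendsto y atTop (𝓝 xbar))
    {D : ℕ → Set (EuclideanSpace ℝ (Fin d))} (hD : ∀ n, D n ∈ CCset X (y n) k)
    {C : Set (EuclideanSpace ℝ (Fin d))} (hCne : C.Nonempty) (hC : IsCompact C)
    (hDC : Tendsto (fun n => hausdorffDist (D n) C) atTop (𝓝 0)) : C ∈ CCset X xbar k := by
  have hfin (n : ℕ) : hausdorffEDist (D n) C ≠ ⊤ :=
    hausdorffEDist_ne_top_of_nonempty_of_bounded ⟨y n, (hD n).2.2.2.1⟩ hCne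
      (hX.isBounded.subset (hD n).1) hC.isBounded
  exact ⟨subset_of_tendsto_hausdorffDist hX.isClosed (fun n => (hD n).1) hfin hDC, hC.isClosed,
    convex_of_tendsto_hausdorffDist (fun n => (hD n).2.2.1) hC.isClosed hfin hDC,
    mem_of_tendsto_hausdorffDist hC.isClosed hfin hDC (fun n => (hD n).2.2.2.1) hy,
    adim_le_of_tendsto_hausdorffDist (fun n => (hD n).2.2.2.2) hfin hDC⟩

end ClosedConvexFamily

theorem stmt19_general (d k : ℕ) (X : Set (EuclideanSpace ℝ (Fin d)))
    (hX : IsCompact X) (hXconv : Convex ℝ X)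
    (xbar : EuclideanSpace ℝ (Fin d)) (hxbar : xbar ∈ interior X)
    (xb : ℕ → EuclideanSpace ℝ (Fin d)) (hxb : ∀ n, xb n ∈ X)
    (hconv : Tendsto xb atTop (nhds xbar)) :
    (∀ C ∈ CCset X xbar k, ∃ Cn : ℕ → Set (EuclideanSpace ℝ (Fin d)),
        (∀ n, Cn n ∈ CCset X (xb n) k) ∧
        Tendsto (fun n => hausdorffDist (Cn n) C) atTop (nhds 0)) ∧
    (∀ Cn : ℕ → Set (EuclideanSpace ℝ (Fin d)), (∀ n, Cn n ∈ CCset X (xb n) k) →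
      ∀ C : Set (EuclideanSpace ℝ (Fin d)), C.Nonempty → IsCompact C →
        (∃ φ : ℕ → ℕ, StrictMono φ ∧
          Tendsto (fun n => hausdorffDist (Cn (φ n)) C) atTop (nhds 0)) →
        C ∈ CCset X xbar k) := by
  refine ⟨fun C hC => exists_tendsto_hausdorffDist_of_mem_CCset hX hXconv hxbar hxb hconv hC, ?_⟩
  rintro Cn hCn C hCne hC ⟨φ, hφ, hlim⟩
  exact mem_CCset_of_tendsto_hausdorffDist hX (hconv.comp hφ.tendsto_atTop) (fun n => hCn (φ n))
    hCne hC hlim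

theorem stmt19 (d k : ℕ) (hk : 1 ≤ k) (X : Set (EuclideanSpace ℝ (Fin d)))
    (hX : IsCompact X) (hXconv : Convex ℝ X) (hint : (interior X).Nonempty)
    (xbar : EuclideanSpace ℝ (Fin d)) (hxbar : xbar ∈ interior X)
    (xb : ℕ → EuclideanSpace ℝ (Fin d)) (hxb : ∀ n, xb n ∈ X)
    (hconv : Tendsto xb atTop (nhds xbar)) :
    (∀ C ∈ CCset X xbar k, ∃ Cn : ℕ → Set (EuclideanSpace ℝ (Fin d)),
        (∀ n, Cn n ∈ CCset X (xb n) k) ∧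
        Tendsto (fun n => hausdorffDist (Cn n) C) atTop (nhds 0)) ∧
    (∀ Cn : ℕ → Set (EuclideanSpace ℝ (Fin d)), (∀ n, Cn n ∈ CCset X (xb n) k) →
      ∀ C : Set (EuclideanSpace ℝ (Fin d)), C.Nonempty → IsCompact C →
        (∃ φ : ℕ → ℕ, StrictMono φ ∧
          Tendsto (fun n => hausdorffDist (Cn (φ n)) C) atTop (nhds 0)) →
        C ∈ CCset X xbar k) :=
  stmt19_general d k X hX hXconv xbar hxbar xb hxb hconv
end
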